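/- arXiv:1612.09586 — 2 statements merged into one kernel-verified Lean document; each statement's English description precedes it below -/
import Mathlib

section
/- For the Gauss hypergeometric function, if Re(c - a - b) > 0 then ₂F₁(a, b; c; 1) = Γ(c)Γ(c−a−b)/(Γ(c−a)Γ(c−b)). -/
open Complex

/-- The Gauss hypergeometric series `₂F₁(a,b;c;z)` for complex parameters. -/
noncomputable def hyp2F1 (a b c z : ℂ) : ℂ :=
  ∑' n : ℕ, (ascPochhammer ℂ n).eval a * (ascPochhammer ℂ n).eval b /
    ((ascPochhammer ℂ n).eval c * (n.factorial : ℂ)) * z ^ n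

/-!
Write `F(c) = ₂F₁(a,b;c;1)` and `G(c) = Γ(c)Γ(c-a-b)/(Γ(c-a)Γ(c-b))`. Both satisfy the contiguous
relation `c(c-a-b) F(c) = (c-a)(c-b) F(c+1)`: for `G` this is `Γ(s+1) = sΓ(s)`; for `F` the
difference of the two sides is a telescoping series, which sums to `0` because the terms satisfy
`n Tₙ = O(n^{Re(a+b-c)})` (by Euler's product `GammaSeq` for `Γ`). Iterating the relation gives
`F(c) G(c+k) = G(c) F(c+k)` for every `k : ℕ`. Finally `F(c+k) → 1` by dominated convergence, the
terms being dominated by those of `₂F₁(|a|,|b|;|a|+|b|+1;1)`, and `G(c+k) → 1` because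
`Γ(z+k)/(Γ(k) k^z) → 1`; hence `F(c) = G(c)`.
-/

open Filter Finset Topology Asymptotics
open scoped Nat

section Pochhammer

theorem ascPochhammer_eval_eq_prod {R : Type*} [CommSemiring R] (r : R) (n : ℕ) :
    (ascPochhammer R n).eval r = ∏ j ∈ range n, (r + j) := by
  induction n with
  | zero => simp
  | succ n ih => rw [ascPochhammer_succ_eval, ih, prod_range_succ]

theorem ascPochhammer_succ_eval_left {R : Type*} [CommSemiring R] (r : R) (n : ℕ) :
    (ascPochhammer R (n + 1)).eval r = r * (ascPochhammer R n).eval (r + 1) := by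
  simp [ascPochhammer_succ_left]

theorem norm_ofReal_add_natCast {x : ℝ} (hx : 0 ≤ x) (j : ℕ) : ‖(x : ℂ) + j‖ = x + j := by
  rw [← Complex.ofReal_natCast, ← Complex.ofReal_add, Complex.norm_real,
    Real.norm_of_nonneg (by positivity)]

theorem norm_ascPochhammer_eval_le (w : ℂ) (n : ℕ) :
    ‖(ascPochhammer ℂ n).eval w‖ ≤ ‖(ascPochhammer ℂ n).eval (‖w‖ : ℂ)‖ := by
  simp only [ascPochhammer_eval_eq_prod, norm_prod, norm_ofReal_add_natCast (norm_nonneg w)]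
  exact prod_le_prod (fun _ _ ↦ norm_nonneg _) fun j _ ↦
    (norm_add_le _ _).trans_eq (by rw [Complex.norm_natCast])

theorem norm_ascPochhammer_eval_le_of_le_re {w : ℂ} {x : ℝ} (hx : 0 ≤ x) (hxw : x ≤ w.re)
    (n : ℕ) : ‖(ascPochhammer ℂ n).eval (x : ℂ)‖ ≤ ‖(ascPochhammer ℂ n).eval w‖ := by
  simp only [ascPochhammer_eval_eq_prod, norm_prod, norm_ofReal_add_natCast hx]
  refine prod_le_prod (fun _ _ ↦ by positivity) fun j _ ↦ ?_
  calc x + j ≤ (w + j).re := by simpa using hxw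
    _ ≤ ‖w + j‖ := Complex.re_le_norm _

theorem norm_ascPochhammer_eval_ofReal_pos {x : ℝ} (hx : 0 < x) (n : ℕ) :
    0 < ‖(ascPochhammer ℂ n).eval (x : ℂ)‖ := by
  rw [ascPochhammer_eval_eq_prod, norm_prod]
  exact prod_pos fun j _ ↦ by rw [norm_ofReal_add_natCast hx.le]; positivity

theorem GammaSeq_eq_div_ascPochhammer (z : ℂ) (n : ℕ) :
    GammaSeq z n = (n : ℂ) ^ z * n ! / (ascPochhammer ℂ (n + 1)).eval z := by
  rw [GammaSeq, ascPochhammer_eval_eq_prod]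

end Pochhammer

section GaussTerm

noncomputable def gaussTerm (a b c : ℂ) (n : ℕ) : ℂ :=
  (ascPochhammer ℂ n).eval a * (ascPochhammer ℂ n).eval b / ((ascPochhammer ℂ n).eval c * n !)

variable (a b c : ℂ)

theorem hyp2F1_one_eq_tsum_gaussTerm : hyp2F1 a b c 1 = ∑' n, gaussTerm a b c n := by
  simp [hyp2F1, gaussTerm]

theorem gaussTerm_succ (n : ℕ) :
    gaussTerm a b c (n + 1) = gaussTerm a b c n * ((a + n) * (b + n) / ((c + n) * (n + 1))) := by
  simp only [gaussTerm, ascPochhammer_succ_eval, Nat.factorial_succ, Nat.cast_mul, Nat.cast_succ,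
    div_mul_div_comm]
  congr 1 <;> ring

variable {c}

theorem gaussTerm_add_one_right (hc : ∀ m : ℕ, c ≠ -m) (n : ℕ) :
    gaussTerm a b (c + 1) n = c / (c + n) * gaussTerm a b c n := by
  have hc0 : c ≠ 0 := by simpa using hc 0
  have hcn : c + n ≠ 0 := fun h ↦ hc n (eq_neg_of_add_eq_zero_left h)
  have hP : (ascPochhammer ℂ n).eval c ≠ 0 := by
    rw [ne_eq, ascPochhammer_eval_eq_zero_iff]
    rintro ⟨m, -, hm⟩
    exact hc m (by rw [hm, neg_neg])
  have hP1 : (ascPochhammer ℂ n).eval (c + 1) = (ascPochhammer ℂ n).eval c * (c + n) / c := by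
    rw [eq_div_iff hc0, ← ascPochhammer_succ_eval, ascPochhammer_succ_eval_left, mul_comm]
  rw [gaussTerm, gaussTerm, hP1]
  field_simp

theorem gaussTerm_contiguous (hc : ∀ m : ℕ, c ≠ -m) (n : ℕ) :
    c * (c - a - b) * gaussTerm a b c n - (c - a) * (c - b) * gaussTerm a b (c + 1) n =
      c * n * gaussTerm a b c n - c * (n + 1) * gaussTerm a b c (n + 1) := by
  have hcn : c + n ≠ 0 := fun h ↦ hc n (eq_neg_of_add_eq_zero_left h)
  have hn : (n : ℂ) + 1 ≠ 0 := by exact_mod_cast n.succ_ne_zero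
  rw [gaussTerm_add_one_right a b hc, gaussTerm_succ]
  field_simp
  ring

theorem norm_gaussTerm_le {w : ℂ} {x : ℝ} (hx : 0 < x) (hxw : x ≤ w.re) (n : ℕ) :
    ‖gaussTerm a b w n‖ ≤ ‖gaussTerm (‖a‖ : ℂ) (‖b‖ : ℂ) (x : ℂ) n‖ := by
  have := norm_ascPochhammer_eval_ofReal_pos hx n
  simp only [gaussTerm, norm_div, norm_mul, Complex.norm_natCast]
  exact div_le_div₀ (by positivity)
    (mul_le_mul (norm_ascPochhammer_eval_le a n) (norm_ascPochhammer_eval_le b n) (by positivity)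
      (by positivity))
    (by positivity) (by gcongr; exact norm_ascPochhammer_eval_le_of_le_re hx.le hxw n)

end GaussTerm

section Convergence

theorem isBigO_inv_GammaSeq (z : ℂ) : (fun n ↦ (GammaSeq z n)⁻¹) =O[atTop] fun _ ↦ (1 : ℝ) := by
  by_cases hz : ∀ m : ℕ, z ≠ -m
  · exact ((GammaSeq_tendsto_Gamma z).inv₀ (Gamma_ne_zero hz)).isBigO_one ℝ
  · push Not at hz
    obtain ⟨m, rfl⟩ := hz
    refine (isBigO_zero _ _).congr' ?_ EventuallyEq.rfl
    filter_upwards [eventually_ge_atTop m] with n hn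
    rw [GammaSeq_eq_div_ascPochhammer, ascPochhammer_eval_neg_coe_nat_of_lt (by omega), div_zero,
      inv_zero]

theorem norm_natCast_cpow_mul_cpow_div_cpow {n : ℕ} (hn : 0 < n) (a b c : ℂ) :
    ‖(n : ℂ) ^ a * (n : ℂ) ^ b / (n : ℂ) ^ c‖ = (n : ℝ) ^ (-(c - a - b).re) := by
  have hn' : (0 : ℝ) < n := by positivity
  rw [norm_div, norm_mul, norm_natCast_cpow_of_pos hn, norm_natCast_cpow_of_pos hn,
    norm_natCast_cpow_of_pos hn, ← Real.rpow_add hn', ← Real.rpow_sub hn']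
  congr 1
  simp only [sub_re]
  ring

theorem natCast_add_one_mul_gaussTerm_succ {n : ℕ} (hn : 0 < n) (a b c : ℂ) :
    ((n : ℂ) + 1) * gaussTerm a b c (n + 1) =
      GammaSeq c n * (GammaSeq a n)⁻¹ * (GammaSeq b n)⁻¹ *
        ((n : ℂ) ^ a * (n : ℂ) ^ b / (n : ℂ) ^ c) := by
  have hn' : (n : ℂ) ≠ 0 := by exact_mod_cast hn.ne'
  have hpow (z : ℂ) : (n : ℂ) ^ z ≠ 0 := cpow_ne_zero_iff.2 (Or.inl hn')
  simp only [gaussTerm, GammaSeq_eq_div_ascPochhammer, Nat.factorial_succ, Nat.cast_mul,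
    Nat.cast_succ]
  field_simp
  rw [mul_div_mul_right _ _ (hpow b), mul_div_mul_right _ _ (hpow a),
    mul_div_mul_right _ _ (hpow c)]

theorem isBigO_natCast_add_one_mul_gaussTerm_succ (a b c : ℂ) :
    (fun n : ℕ ↦ ((n : ℂ) + 1) * gaussTerm a b c (n + 1)) =O[atTop]
      fun n : ℕ ↦ (n : ℝ) ^ (-(c - a - b).re) := by
  have hbdd : (fun n ↦ GammaSeq c n * (GammaSeq a n)⁻¹ * (GammaSeq b n)⁻¹) =O[atTop]
      fun _ ↦ (1 : ℝ) := by
    simpa using (((GammaSeq_tendsto_Gamma c).isBigO_one ℝ).mul (isBigO_inv_GammaSeq a)).mul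
      (isBigO_inv_GammaSeq b)
  have hpow : (fun n : ℕ ↦ (n : ℂ) ^ a * (n : ℂ) ^ b / (n : ℂ) ^ c) =O[atTop]
      fun n : ℕ ↦ (n : ℝ) ^ (-(c - a - b).re) := by
    refine isBigO_norm_left.1 ((isBigO_refl _ _).congr' ?_ EventuallyEq.rfl)
    filter_upwards [eventually_gt_atTop 0] with n hn
    exact (norm_natCast_cpow_mul_cpow_div_cpow hn a b c).symm
  refine (hbdd.mul hpow).congr' ?_ (by simp)
  filter_upwards [eventually_gt_atTop 0] with n hn
  exact (natCast_add_one_mul_gaussTerm_succ hn a b c).symm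

variable {a b c : ℂ}

theorem summable_gaussTerm (h : 0 < (c - a - b).re) : Summable (gaussTerm a b c) := by
  have hinv : (fun n : ℕ ↦ ((n : ℂ) + 1)⁻¹) =O[atTop] fun n : ℕ ↦ (n : ℝ) ^ (-1 : ℝ) := by
    refine IsBigO.of_bound 1 ?_
    filter_upwards [eventually_gt_atTop 0] with n hn
    rw [one_mul, Real.rpow_neg_one, norm_inv, norm_inv, ← Nat.cast_add_one, Complex.norm_natCast,
      Real.norm_natCast]
    gcongr
    simp
  rw [← summable_nat_add_iff 1]
  refine summable_of_isBigO_nat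
    (Real.summable_nat_rpow.2 (by linarith : -1 + -(c - a - b).re < -1))
    ((hinv.mul (isBigO_natCast_add_one_mul_gaussTerm_succ a b c)).congr (fun n ↦ ?_) fun n ↦ ?_)
  · rw [← mul_assoc, inv_mul_cancel₀ (by exact_mod_cast n.succ_ne_zero), one_mul]
  · rw [Real.rpow_add' (Nat.cast_nonneg n) (by linarith)]

theorem tendsto_natCast_mul_gaussTerm (h : 0 < (c - a - b).re) :
    Tendsto (fun n : ℕ ↦ (n : ℂ) * gaussTerm a b c n) atTop (𝓝 0) := by
  rw [← tendsto_add_atTop_iff_nat 1]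
  push_cast
  exact (isBigO_natCast_add_one_mul_gaussTerm_succ a b c).trans_tendsto
    ((tendsto_rpow_neg_atTop h).comp tendsto_natCast_atTop_atTop)

end Convergence

noncomputable def gaussGammaRatio (a b c : ℂ) : ℂ :=
  Gamma c * Gamma (c - a - b) / (Gamma (c - a) * Gamma (c - b))

section Recurrence

theorem tsum_sub_succ_eq_of_tendsto {E : Type*} [AddCommGroup E] [TopologicalSpace E]
    [IsTopologicalAddGroup E] [T2Space E] {u : ℕ → E} {l : E}
    (hs : Summable fun n ↦ u n - u (n + 1)) (hu : Tendsto u atTop (𝓝 l)) :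
    ∑' n, (u n - u (n + 1)) = u 0 - l := by
  refine tendsto_nhds_unique hs.hasSum.tendsto_sum_nat ?_
  simpa only [sum_range_sub'] using tendsto_const_nhds.sub hu

theorem eq_of_mul_eq_mul_succ_of_tendsto_one {K : Type*} [Field K] [TopologicalSpace K]
    [ContinuousMul K] [T2Space K] {p q u v : ℕ → K} (hp : ∀ n, p n ≠ 0)
    (hu : ∀ n, p n * u n = q n * u (n + 1)) (hv : ∀ n, p n * v n = q n * v (n + 1))
    (hu₁ : Tendsto u atTop (𝓝 1)) (hv₁ : Tendsto v atTop (𝓝 1)) : u 0 = v 0 := by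
  have hprod : ∀ w : ℕ → K, (∀ n, p n * w n = q n * w (n + 1)) →
      ∀ k, (∏ j ∈ range k, p j) * w 0 = (∏ j ∈ range k, q j) * w k := by
    intro w hw k
    induction k with
    | zero => simp
    | succ k ih =>
      rw [prod_range_succ, prod_range_succ, mul_right_comm, ih, mul_assoc, mul_comm (w k), hw,
        mul_assoc]
  have hcross (k : ℕ) : u 0 * v k = v 0 * u k := by
    refine mul_left_cancel₀ (prod_ne_zero_iff.2 fun j _ ↦ hp j : ∏ j ∈ range k, p j ≠ 0) ?_
    rw [← mul_assoc, hprod u hu, ← mul_assoc, hprod v hv]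
    ring
  simpa using tendsto_nhds_unique (hv₁.const_mul (u 0))
    ((hu₁.const_mul (v 0)).congr fun k ↦ (hcross k).symm)

variable {a b c : ℂ}

theorem tsum_gaussTerm_contiguous (hc : ∀ m : ℕ, c ≠ -m) (h : 0 < (c - a - b).re) :
    c * (c - a - b) * ∑' n, gaussTerm a b c n =
      (c - a) * (c - b) * ∑' n, gaussTerm a b (c + 1) n := by
  have h1 : 0 < (c + 1 - a - b).re := by
    have : (c + 1 - a - b).re = (c - a - b).re + 1 := by simp only [sub_re, add_re, one_re]; ring
    linarith
  have hs₁ := (summable_gaussTerm h).mul_left (c * (c - a - b))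
  have hs₂ := (summable_gaussTerm h1).mul_left ((c - a) * (c - b))
  have hu : Tendsto (fun n : ℕ ↦ c * n * gaussTerm a b c n) atTop (𝓝 0) := by
    simpa [mul_assoc] using (tendsto_natCast_mul_gaussTerm h).const_mul c
  have htel := tsum_sub_succ_eq_of_tendsto
    (by simpa [← gaussTerm_contiguous a b hc] using hs₁.sub hs₂) hu
  rw [← sub_eq_zero, ← tsum_mul_left, ← tsum_mul_left, ← hs₁.tsum_sub hs₂]
  simpa [gaussTerm_contiguous a b hc] using htel

theorem gaussGammaRatio_contiguous (hc : c ≠ 0) (habc : c - a - b ≠ 0) :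
    c * (c - a - b) * gaussGammaRatio a b c =
      (c - a) * (c - b) * gaussGammaRatio a b (c + 1) := by
  -- `1/Γ(s) = s/Γ(s+1)` holds at the poles too, so `Γ(c - a)` and `Γ(c - b)` need no case split.
  have ha := one_div_Gamma_eq_self_mul_one_div_Gamma_add_one (c - a)
  have hb := one_div_Gamma_eq_self_mul_one_div_Gamma_add_one (c - b)
  rw [gaussGammaRatio, gaussGammaRatio, show c + 1 - a - b = c - a - b + 1 by ring,
    show c + 1 - a = c - a + 1 by ring, show c + 1 - b = c - b + 1 by ring, Gamma_add_one c hc,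
    Gamma_add_one _ habc, div_eq_mul_inv, div_eq_mul_inv, mul_inv, mul_inv, ha, hb]
  ring

end Recurrence

section GammaAsymptotics

noncomputable def gammaNatShiftRatio (z : ℂ) (k : ℕ) : ℂ :=
  Gamma (z + k) / (Gamma k * (k : ℂ) ^ z)

theorem Gamma_natCast_ne_zero {k : ℕ} (hk : 0 < k) : Gamma k ≠ 0 :=
  Gamma_ne_zero_of_re_pos (by simpa using hk)

theorem gammaNatShiftRatio_eq_GammaSeq {z : ℂ} (hz : ∀ m : ℕ, z ≠ -m) {k : ℕ} (hk : 0 < k) :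
    gammaNatShiftRatio z k = Gamma z * (k / (k + z)) * (GammaSeq z k)⁻¹ := by
  have hk' : (k : ℂ) ≠ 0 := by exact_mod_cast hk.ne'
  have hkz : (k : ℂ) + z ≠ 0 := fun h ↦ hz k (eq_neg_of_add_eq_zero_right h)
  have hfac : (k ! : ℂ) = k * Gamma k := by
    rw [← Gamma_nat_eq_factorial, Gamma_add_one _ hk']
  rw [gammaNatShiftRatio, ← mul_div_cancel_left₀ (Gamma (z + k)) (Gamma_ne_zero hz), mul_div_assoc,
    Gamma_add_nat_div_Gamma_eq z hz, GammaSeq_eq_div_ascPochhammer, ascPochhammer_succ_eval, hfac]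
  have := Gamma_natCast_ne_zero hk
  have := cpow_ne_zero_iff.2 (Or.inl hk' : (k : ℂ) ≠ 0 ∨ z = 0)
  field_simp
  ring

theorem tendsto_gammaNatShiftRatio_of_ne {z : ℂ} (hz : ∀ m : ℕ, z ≠ -m) :
    Tendsto (gammaNatShiftRatio z) atTop (𝓝 1) := by
  have hlim := ((tendsto_natCast_div_add_atTop z).const_mul (Gamma z)).mul
    ((GammaSeq_tendsto_Gamma z).inv₀ (Gamma_ne_zero hz))
  rw [mul_one, mul_inv_cancel₀ (Gamma_ne_zero hz)] at hlim
  refine hlim.congr' ?_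
  filter_upwards [eventually_gt_atTop 0] with k hk
  exact (gammaNatShiftRatio_eq_GammaSeq hz hk).symm

theorem gammaNatShiftRatio_eq_mul_add_one (z : ℂ) {k : ℕ} (hk : 0 < k) (hzk : z + k ≠ 0) :
    gammaNatShiftRatio z k = k / (k + z) * gammaNatShiftRatio (z + 1) k := by
  have hk' : (k : ℂ) ≠ 0 := by exact_mod_cast hk.ne'
  have := Gamma_natCast_ne_zero hk
  have := cpow_ne_zero_iff.2 (Or.inl hk' : (k : ℂ) ≠ 0 ∨ z = 0)
  rw [gammaNatShiftRatio, gammaNatShiftRatio, add_right_comm, Gamma_add_one _ hzk,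
    cpow_add _ _ hk', cpow_one, add_comm (k : ℂ)]
  field_simp

theorem tendsto_gammaNatShiftRatio_of_add_one {z : ℂ}
    (h : Tendsto (gammaNatShiftRatio (z + 1)) atTop (𝓝 1)) :
    Tendsto (gammaNatShiftRatio z) atTop (𝓝 1) := by
  have hlim := (tendsto_natCast_div_add_atTop z).mul h
  rw [one_mul] at hlim
  refine hlim.congr' ?_
  filter_upwards [eventually_gt_atTop ⌈‖z‖⌉₊] with k hk
  have hzk : ‖z‖ < k := Nat.lt_of_ceil_lt hk
  refine (gammaNatShiftRatio_eq_mul_add_one z (by omega) fun h0 ↦ ?_).symm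
  rw [eq_neg_of_add_eq_zero_left h0, norm_neg, Complex.norm_natCast] at hzk
  exact lt_irrefl _ hzk

theorem tendsto_gammaNatShiftRatio (z : ℂ) : Tendsto (gammaNatShiftRatio z) atTop (𝓝 1) := by
  have hshift (m : ℕ) (w : ℂ) (h : Tendsto (gammaNatShiftRatio (w + m)) atTop (𝓝 1)) :
      Tendsto (gammaNatShiftRatio w) atTop (𝓝 1) := by
    induction m generalizing w with
    | zero => simpa using h
    | succ m ih =>
      refine tendsto_gammaNatShiftRatio_of_add_one (ih (w + 1) ?_)
      rwa [Nat.cast_succ, add_comm (m : ℂ), ← add_assoc] at h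
  by_cases hz : ∀ m : ℕ, z ≠ -m
  · exact tendsto_gammaNatShiftRatio_of_ne hz
  · push Not at hz
    obtain ⟨m, rfl⟩ := hz
    refine hshift (m + 1) _ (tendsto_gammaNatShiftRatio_of_ne fun n hn ↦ ?_)
    have h1 : (1 : ℂ) = -n := by rw [← hn]; push_cast; ring
    have := congrArg re h1
    simp only [one_re, neg_re, natCast_re] at this
    linarith [(n.cast_nonneg : (0 : ℝ) ≤ n)]

theorem gaussGammaRatio_add_nat_eq (a b c : ℂ) {k : ℕ} (hk : 0 < k) :
    gaussGammaRatio a b (c + k) =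
      gammaNatShiftRatio c k * gammaNatShiftRatio (c - a - b) k /
        (gammaNatShiftRatio (c - a) k * gammaNatShiftRatio (c - b) k) := by
  have hk' : (k : ℂ) ≠ 0 := by exact_mod_cast hk.ne'
  have hpow : (k : ℂ) ^ c * (k : ℂ) ^ (c - a - b) = (k : ℂ) ^ (c - a) * (k : ℂ) ^ (c - b) := by
    rw [← cpow_add _ _ hk', ← cpow_add _ _ hk']
    ring_nf
  have hD : Gamma k * (k : ℂ) ^ c * (Gamma k * (k : ℂ) ^ (c - a - b)) ≠ 0 := by
    have hΓ := Gamma_natCast_ne_zero hk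
    have hk'' (z : ℂ) : (k : ℂ) ^ z ≠ 0 := cpow_ne_zero_iff.2 (Or.inl hk')
    exact mul_ne_zero (mul_ne_zero hΓ (hk'' _)) (mul_ne_zero hΓ (hk'' _))
  have hD' : Gamma k * (k : ℂ) ^ (c - a) * (Gamma k * (k : ℂ) ^ (c - b)) =
      Gamma k * (k : ℂ) ^ c * (Gamma k * (k : ℂ) ^ (c - a - b)) := by
    linear_combination (-Gamma k ^ 2) * hpow
  simp only [gammaNatShiftRatio]
  rw [div_mul_div_comm, div_mul_div_comm, hD', div_div_div_cancel_right₀ hD, gaussGammaRatio]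
  ring_nf

theorem tendsto_gaussGammaRatio_add_nat (a b c : ℂ) :
    Tendsto (fun k : ℕ ↦ gaussGammaRatio a b (c + k)) atTop (𝓝 1) := by
  have := ((tendsto_gammaNatShiftRatio c).mul (tendsto_gammaNatShiftRatio (c - a - b))).div
    ((tendsto_gammaNatShiftRatio (c - a)).mul (tendsto_gammaNatShiftRatio (c - b))) (by norm_num)
  rw [mul_one, div_one] at this
  refine this.congr' ?_
  filter_upwards [eventually_gt_atTop 0] with k hk
  exact (gaussGammaRatio_add_nat_eq a b c hk).symm

end GammaAsymptotics

section Tannery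

theorem tendsto_gaussTerm_add_nat (a b c : ℂ) (n : ℕ) :
    Tendsto (fun k : ℕ ↦ gaussTerm a b (c + k) n) atTop (𝓝 (if n = 0 then 1 else 0)) := by
  rcases Nat.eq_zero_or_pos n with rfl | hn
  · simp [gaussTerm]
  rw [if_neg hn.ne', tendsto_zero_iff_norm_tendsto_zero]
  have hck : Tendsto (fun k : ℕ ↦ ‖c + k‖) atTop atTop := by
    refine tendsto_atTop_mono (fun k ↦ ?_)
      (tendsto_atTop_add_const_left _ (-‖c‖) tendsto_natCast_atTop_atTop)
    have := norm_sub_le (c + k) c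
    rw [add_sub_cancel_left, Complex.norm_natCast] at this
    linarith
  have hdeg : 0 < (ascPochhammer ℂ n).degree := by
    rw [Polynomial.degree_eq_natDegree (monic_ascPochhammer ℂ n).ne_zero, ascPochhammer_natDegree]
    exact_mod_cast hn
  have hP := (ascPochhammer ℂ n).tendsto_norm_atTop hdeg hck
  simp only [gaussTerm, norm_div, norm_mul, Complex.norm_natCast]
  exact tendsto_const_nhds.div_atTop (hP.atTop_mul_const (by positivity))

theorem tendsto_tsum_gaussTerm_add_nat (a b c : ℂ) :
    Tendsto (fun k : ℕ ↦ ∑' n, gaussTerm a b (c + k) n) atTop (𝓝 1) := by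
  set x : ℝ := ‖a‖ + ‖b‖ + 1
  have hx : (x : ℂ) - ‖a‖ - ‖b‖ = 1 := by push_cast [x]; ring
  have hsum : Summable fun n ↦ ‖gaussTerm (‖a‖ : ℂ) (‖b‖ : ℂ) (x : ℂ) n‖ :=
    (summable_gaussTerm (by rw [hx, one_re]; exact one_pos)).norm
  have hlim := tendsto_tsum_of_dominated_convergence hsum (tendsto_gaussTerm_add_nat a b c) ?_
  · rwa [tsum_ite_eq] at hlim
  filter_upwards [eventually_ge_atTop ⌈x - c.re⌉₊] with k hk n
  refine norm_gaussTerm_le a b (by positivity) ?_ n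
  have := Nat.le_of_ceil_le hk
  rw [add_re, natCast_re]
  linarith

end Tannery

/-- Gauss summation theorem: `₂F₁(a,b;c;1) = Γ(c)Γ(c−a−b)/(Γ(c−a)Γ(c−b))`
when `Re(c−a−b) > 0` and `c` is not a nonpositive integer. -/
theorem gauss_summation (a b c : ℂ) (hc : ∀ n : ℕ, c ≠ -(n : ℂ))
    (h : 0 < (c - a - b).re) :
    hyp2F1 a b c 1 =
      Complex.Gamma c * Complex.Gamma (c - a - b) /
        (Complex.Gamma (c - a) * Complex.Gamma (c - b)) := by
  have hck (k : ℕ) : ∀ m : ℕ, c + k ≠ -m := fun m hm ↦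
    hc (m + k) (by push_cast; linear_combination hm)
  have hσ (k : ℕ) : 0 < (c + k - a - b).re := by
    simpa [add_sub_right_comm] using add_pos_of_pos_of_nonneg h k.cast_nonneg
  have hck₀ (k : ℕ) : c + k ≠ 0 := by simpa using hck k 0
  have hσ₀ (k : ℕ) : c + k - a - b ≠ 0 := fun h0 ↦ (hσ k).ne' (by rw [h0, zero_re])
  have hshift (k : ℕ) : c + ↑(k + 1) = c + k + 1 := by push_cast; ring
  rw [hyp2F1_one_eq_tsum_gaussTerm]
  simpa [gaussGammaRatio] using eq_of_mul_eq_mul_succ_of_tendsto_one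
    (p := fun k ↦ (c + k) * (c + k - a - b)) (q := fun k ↦ (c + k - a) * (c + k - b))
    (fun k ↦ mul_ne_zero (hck₀ k) (hσ₀ k))
    (fun k ↦ by simpa only [hshift] using tsum_gaussTerm_contiguous (hck k) (hσ k))
    (fun k ↦ by simpa only [hshift] using gaussGammaRatio_contiguous (hck₀ k) (hσ₀ k))
    (tendsto_tsum_gaussTerm_add_nat a b c) (tendsto_gaussGammaRatio_add_nat a b c)
end

section
/- Let Γ be the Gamma function and fix γ with 1/2 < γ < 1 + |l+α| for given l ∈ ℤ, α ∈ ℝ. Then the constant C_{γ,α,l} = [π Γ(2γ−1)/(2^{2γ} Γ(γ)²)] · [Γ(|l+α|−γ+1)/Γ(|l+α|+γ) + Γ(|l+α|−γ+2)/Γ(|l+α|+γ+1)] is finite and positive, and for fixed γ and α it is a decreasing function of |l+α|; in particular sup over l ∈ ℤ of C_{γ,α,l} is attained at the l minimizing |l+α|. -/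
open Real

lemma gamma_ratio_anti {a : ℝ} (ha : 0 < a) {x y : ℝ} (hx : 0 < x) (hxy : x ≤ y) :
    Real.Gamma y / Real.Gamma (y + a) ≤ Real.Gamma x / Real.Gamma (x + a) := by
  rcases eq_or_lt_of_le hxy with rfl | hlt
  · exact le_rfl
  have hy : 0 < y := lt_trans hx hlt
  have hxa : 0 < x + a := by linarith
  have hya : 0 < y + a := by linarith
  have hGx := Real.Gamma_pos_of_pos hx
  have hGy := Real.Gamma_pos_of_pos hy
  have hGxa := Real.Gamma_pos_of_pos hxa
  have hGya := Real.Gamma_pos_of_pos hya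
  set f : ℝ → ℝ := Real.log ∘ Real.Gamma with hf
  have hconv := Real.convexOn_log_Gamma
  -- slope(x, x+a) ≤ slope(x, y+a)
  have h1 : (f (x+a) - f x) / ((x+a) - x) ≤ (f (y+a) - f x) / ((y+a) - x) :=
    hconv.secant_mono (Set.mem_Ioi.mpr hx) (Set.mem_Ioi.mpr hxa) (Set.mem_Ioi.mpr hya)
      (by linarith) (by linarith) (by linarith)
  -- slope(y+a, x) ≤ slope(y+a, y)
  have h2 : (f x - f (y+a)) / (x - (y+a)) ≤ (f y - f (y+a)) / (y - (y+a)) :=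
    hconv.secant_mono (Set.mem_Ioi.mpr hya) (Set.mem_Ioi.mpr hx) (Set.mem_Ioi.mpr hy)
      (by linarith) (by linarith) hxy
  have key : f (x+a) - f x ≤ f (y+a) - f y := by
    have e1 : ((x+a) - x) = a := by ring
    have e2 : (f x - f (y+a)) / (x - (y+a)) = (f (y+a) - f x) / ((y+a) - x) := by
      rw [← neg_div_neg_eq]; ring_nf
    have e3 : (f y - f (y+a)) / (y - (y+a)) = (f (y+a) - f y) / a := by
      rw [← neg_div_neg_eq]; ring_nf
    rw [e2, e3] at h2
    rw [e1] at h1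
    have := le_trans h1 h2
    exact (div_le_div_iff_of_pos_right ha).mp this
  have key' : Real.log (Real.Gamma y * Real.Gamma (x+a)) ≤
      Real.log (Real.Gamma x * Real.Gamma (y+a)) := by
    rw [Real.log_mul (ne_of_gt hGy) (ne_of_gt hGxa),
        Real.log_mul (ne_of_gt hGx) (ne_of_gt hGya)]
    have h3 : f (x+a) + f y ≤ f (y+a) + f x := by linarith
    simp only [hf, Function.comp] at h3
    linarith
  have hmul : Real.Gamma y * Real.Gamma (x+a) ≤ Real.Gamma x * Real.Gamma (y+a) :=
    (Real.log_le_log_iff (by positivity) (by positivity)).mp key'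
  rw [div_le_div_iff₀ hGya hGxa]
  linarith

/-- The constant `C_{γ,α,l}` with `ν = |l+α|`. -/
noncomputable def smoothingConst (γ ν : ℝ) : ℝ :=
  Real.pi * Real.Gamma (2 * γ - 1) / (2 ^ (2 * γ) * Real.Gamma γ ^ 2) *
    (Real.Gamma (ν - γ + 1) / Real.Gamma (ν + γ) +
      Real.Gamma (ν - γ + 2) / Real.Gamma (ν + γ + 1))

lemma smoothingConst_anti {γ : ℝ} (h1 : 1 / 2 < γ) {ν₁ ν₂ : ℝ} (hν1 : γ < 1 + ν₁)
    (hle : ν₁ ≤ ν₂) : smoothingConst γ ν₂ ≤ smoothingConst γ ν₁ := by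
  have ha : (0:ℝ) < 2 * γ - 1 := by linarith
  have hx1 : (0:ℝ) < ν₁ - γ + 1 := by linarith
  have hx2 : (0:ℝ) < ν₁ - γ + 2 := by linarith
  have hγ : (0:ℝ) < γ := by linarith
  have hfront : 0 < Real.pi * Real.Gamma (2 * γ - 1) / (2 ^ (2 * γ) * Real.Gamma γ ^ 2) := by
    have := Real.Gamma_pos_of_pos ha
    have := Real.Gamma_pos_of_pos hγ
    have := Real.pi_pos
    positivity
  unfold smoothingConst
  apply mul_le_mul_of_nonneg_left _ (le_of_lt hfront)
  have t1 := gamma_ratio_anti ha hx1 (by linarith : ν₁ - γ + 1 ≤ ν₂ - γ + 1)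
  have t2 := gamma_ratio_anti ha hx2 (by linarith : ν₁ - γ + 2 ≤ ν₂ - γ + 2)
  have e1 : ν₁ - γ + 1 + (2 * γ - 1) = ν₁ + γ := by ring
  have e2 : ν₂ - γ + 1 + (2 * γ - 1) = ν₂ + γ := by ring
  have e3 : ν₁ - γ + 2 + (2 * γ - 1) = ν₁ + γ + 1 := by ring
  have e4 : ν₂ - γ + 2 + (2 * γ - 1) = ν₂ + γ + 1 := by ring
  rw [e1, e2] at t1
  rw [e3, e4] at t2
  linarith

/-- For `1/2 < γ < 1 + |l+α|`, the constant `C_{γ,α,l}` is finite and positive, it is a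
decreasing function of `|l+α|`, and the supremum over `l ∈ ℤ` is attained at any `l₀`
minimizing `|l₀+α|`. -/
theorem smoothingConst_pos_decreasing (l : ℤ) (α γ : ℝ)
    (h1 : 1 / 2 < γ) (h2 : γ < 1 + |(l : ℝ) + α|) :
    0 < smoothingConst γ |(l : ℝ) + α| ∧
    (∀ ν₁ ν₂ : ℝ, γ < 1 + ν₁ → ν₁ ≤ ν₂ →
      smoothingConst γ ν₂ ≤ smoothingConst γ ν₁) ∧
    (∀ l₀ : ℤ, (∀ k : ℤ, |(l₀ : ℝ) + α| ≤ |(k : ℝ) + α|) → γ < 1 + |(l₀ : ℝ) + α| →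
      ∀ k : ℤ, γ < 1 + |(k : ℝ) + α| →
        smoothingConst γ |(k : ℝ) + α| ≤ smoothingConst γ |(l₀ : ℝ) + α|) := by
  refine ⟨?_, fun ν₁ ν₂ hν1 hle => smoothingConst_anti h1 hν1 hle, ?_⟩
  · set ν := |(l : ℝ) + α|
    have hν : 0 ≤ ν := abs_nonneg _
    have hγ : (0:ℝ) < γ := by linarith
    have h2γ : (0:ℝ) < 2 * γ - 1 := by linarith
    have hx1 : (0:ℝ) < ν - γ + 1 := by linarith
    have hx2 : (0:ℝ) < ν - γ + 2 := by linarith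
    have hy1 : (0:ℝ) < ν + γ := by linarith
    have hy2 : (0:ℝ) < ν + γ + 1 := by linarith
    unfold smoothingConst
    have := Real.Gamma_pos_of_pos hγ
    have := Real.Gamma_pos_of_pos h2γ
    have := Real.Gamma_pos_of_pos hx1
    have := Real.Gamma_pos_of_pos hx2
    have := Real.Gamma_pos_of_pos hy1
    have := Real.Gamma_pos_of_pos hy2
    have := Real.pi_pos
    positivity
  · intro l₀ hmin hl₀ k hk
    exact smoothingConst_anti h1 hl₀ (hmin k)
end
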